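/- arXiv:1707.04018 — 3 statements merged into one kernel-verified Lean document; each statement's English description precedes it below -/
import Mathlib

section
/- For every u ∈ C_c^∞((0,π)), the inequality (1/4) ∫_0^π u(θ)²/sin²θ dθ ≤ ∫_0^π u'(θ)² dθ holds. -/
open MeasureTheory Real intervalIntegral

/-- For every `u ∈ C_c^∞((0,π))`,
`(1/4) ∫₀^π u²/sin²θ dθ ≤ ∫₀^π u'(θ)² dθ`. -/
theorem one_dim_hardy_sin (u : ℝ → ℝ)
    (hu_smooth : ContDiff ℝ (⊤ : ℕ∞) u) (hu_cpt : HasCompactSupport u)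
    (hu_supp : tsupport u ⊆ Set.Ioo 0 Real.pi) :
    (1 / 4 : ℝ) * ∫ θ in (0:ℝ)..Real.pi, u θ ^ 2 / Real.sin θ ^ 2 ≤
      ∫ θ in (0:ℝ)..Real.pi, (deriv u θ) ^ 2 := by
  have hπ : (0:ℝ) < Real.pi := Real.pi_pos
  have hudiff : Differentiable ℝ u := hu_smooth.differentiable (by simp)
  have hu'cont : Continuous (deriv u) := hu_smooth.continuous_deriv (by simp)
  -- localize the support
  set K : Set ℝ := insert (Real.pi/2) (tsupport u) with hKdef
  have hKc : IsCompact K := hu_cpt.insert _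
  have hKne : K.Nonempty := ⟨_, Set.mem_insert _ _⟩
  have hKsub : K ⊆ Set.Ioo 0 Real.pi := by
    intro x hx
    rcases hx with rfl | hx
    · constructor <;> [positivity; linarith]
    · exact hu_supp hx
  set a : ℝ := sInf K with ha
  set b : ℝ := sSup K with hb
  have haK : a ∈ K := hKc.sInf_mem hKne
  have hbK : b ∈ K := hKc.sSup_mem hKne
  have ha0 : 0 < a := (hKsub haK).1
  have hbπ : b < Real.pi := (hKsub hbK).2
  have hab : a ≤ b := csInf_le_csSup hKne hKc.bddBelow hKc.bddAbove
  set a' : ℝ := a / 2 with ha'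
  set b' : ℝ := (b + Real.pi) / 2 with hb'
  have ha'0 : 0 < a' := by positivity
  have ha'a : a' < a := by simp only [ha']; linarith
  have hbb' : b < b' := by simp only [hb']; linarith
  have hb'π : b' < Real.pi := by simp only [hb']; linarith
  have ha'b' : a' ≤ b' := by linarith
  -- vanishing outside [a,b]
  have hout : ∀ x : ℝ, x ≤ a' ∨ b' ≤ x → u x = 0 ∧ deriv u x = 0 := by
    intro x hx
    have hxK : x ∉ tsupport u := by
      intro hxK
      have h1 : a ≤ x := csInf_le hKc.bddBelow (Set.mem_insert_of_mem _ hxK)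
      have h2 : x ≤ b := le_csSup hKc.bddAbove (Set.mem_insert_of_mem _ hxK)
      rcases hx with hx | hx <;> linarith
    refine ⟨image_eq_zero_of_notMem_tsupport hxK, ?_⟩
    have : x ∉ Function.support (deriv u) := fun h => hxK (support_deriv_subset h)
    simpa using Set.notMem_subset (fun y hy => hy) this
  -- the two integrands
  set f1 : ℝ → ℝ := fun θ => u θ ^ 2 / Real.sin θ ^ 2 with hf1
  set f2 : ℝ → ℝ := fun θ => (deriv u θ) ^ 2 with hf2
  -- sin is positive on [a', b']
  have hsin : ∀ x ∈ Set.Icc a' b', 0 < Real.sin x := by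
    intro x hx
    exact Real.sin_pos_of_pos_of_lt_pi (lt_of_lt_of_le ha'0 hx.1) (lt_of_le_of_lt hx.2 hb'π)
  have huIcc : Set.uIcc a' b' = Set.Icc a' b' := Set.uIcc_of_le ha'b'
  -- continuity of integrands on [a', b']
  have hf1cont : ContinuousOn f1 (Set.Icc a' b') := by
    apply ContinuousOn.div (hu_smooth.continuous.pow 2).continuousOn
      ((Real.continuous_sin.pow 2).continuousOn)
    intro x hx
    exact pow_ne_zero _ (ne_of_gt (hsin x hx))
  have hf2cont : Continuous f2 := hu'cont.pow 2
  set g : ℝ → ℝ := fun θ => 2 * u θ * deriv u θ * (Real.cos θ / Real.sin θ) with hg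
  have hgcont : ContinuousOn g (Set.Icc a' b') := by
    apply ContinuousOn.mul
    · exact (continuous_const.mul hu_smooth.continuous |>.mul hu'cont).continuousOn
    · exact ContinuousOn.div Real.continuous_cos.continuousOn
        Real.continuous_sin.continuousOn (fun x hx => ne_of_gt (hsin x hx))
  -- integrability
  have hif1 : IntervalIntegrable f1 volume a' b' := by
    apply ContinuousOn.intervalIntegrable; rwa [huIcc]
  have hif2 : IntervalIntegrable f2 volume a' b' := hf2cont.intervalIntegrable _ _
  have hig : IntervalIntegrable g volume a' b' := by
    apply ContinuousOn.intervalIntegrable; rwa [huIcc]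
  -- reduce the full integrals to [a', b']
  have hzero1 : ∀ x ∈ Set.uIcc (0:ℝ) a', f1 x = 0 := by
    intro x hx
    rw [Set.uIcc_of_le (le_of_lt ha'0)] at hx
    have := (hout x (Or.inl hx.2)).1
    simp [hf1, this]
  have hzero2 : ∀ x ∈ Set.uIcc b' Real.pi, f1 x = 0 := by
    intro x hx
    rw [Set.uIcc_of_le (le_of_lt hb'π)] at hx
    have := (hout x (Or.inr hx.1)).1
    simp [hf1, this]
  have hzero3 : ∀ x ∈ Set.uIcc (0:ℝ) a', f2 x = 0 := by
    intro x hx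
    rw [Set.uIcc_of_le (le_of_lt ha'0)] at hx
    have := (hout x (Or.inl hx.2)).2
    simp [hf2, this]
  have hzero4 : ∀ x ∈ Set.uIcc b' Real.pi, f2 x = 0 := by
    intro x hx
    rw [Set.uIcc_of_le (le_of_lt hb'π)] at hx
    have := (hout x (Or.inr hx.1)).2
    simp [hf2, this]
  have hsplit : ∀ (f : ℝ → ℝ), (∀ x ∈ Set.uIcc (0:ℝ) a', f x = 0) →
      (∀ x ∈ Set.uIcc b' Real.pi, f x = 0) →
      IntervalIntegrable f volume a' b' →
      (∫ θ in (0:ℝ)..Real.pi, f θ) = ∫ θ in a'..b', f θ := by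
    intro f h1 h2 hi
    have e1 : (∫ θ in (0:ℝ)..a', f θ) = 0 := by
      rw [intervalIntegral.integral_congr (g := fun _ => 0) h1]; simp
    have e2 : (∫ θ in b'..Real.pi, f θ) = 0 := by
      rw [intervalIntegral.integral_congr (g := fun _ => 0) h2]; simp
    have i1 : IntervalIntegrable f volume 0 a' := by
      apply ContinuousOn.intervalIntegrable
      exact continuousOn_const.congr h1
    have i2 : IntervalIntegrable f volume b' Real.pi := by
      apply ContinuousOn.intervalIntegrable
      exact continuousOn_const.congr h2
    have s1 := intervalIntegral.integral_add_adjacent_intervals i1 hi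
    have s2 := intervalIntegral.integral_add_adjacent_intervals (i1.trans hi) i2
    rw [← s2, ← s1, e1, e2]; ring
  have hred1 : (∫ θ in (0:ℝ)..Real.pi, f1 θ) = ∫ θ in a'..b', f1 θ :=
    hsplit f1 hzero1 hzero2 hif1
  have hred2 : (∫ θ in (0:ℝ)..Real.pi, f2 θ) = ∫ θ in a'..b', f2 θ :=
    hsplit f2 hzero3 hzero4 hif2
  -- integration by parts : ∫ f1 = ∫ g on [a',b']
  set F : ℝ → ℝ := fun θ => -(u θ ^ 2 * (Real.cos θ / Real.sin θ)) with hF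
  have hFderiv : ∀ x ∈ Set.uIcc a' b', HasDerivAt F (f1 x - g x) x := by
    intro x hx
    rw [huIcc] at hx
    have hs : Real.sin x ≠ 0 := ne_of_gt (hsin x hx)
    have h1 : HasDerivAt (fun y => u y ^ 2) (2 * u x * deriv u x) x := by
      have := ((hudiff x).hasDerivAt).fun_pow 2
      simpa [mul_comm, mul_assoc, mul_left_comm] using this
    have h2 : HasDerivAt (fun y => Real.cos y / Real.sin y)
        ((-Real.sin x * Real.sin x - Real.cos x * Real.cos x) / Real.sin x ^ 2) x :=
      (Real.hasDerivAt_cos x).div (Real.hasDerivAt_sin x) hs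
    have h3 := (h1.mul h2).neg
    have hpyth := Real.sin_sq_add_cos_sq x
    have hval : f1 x - g x = -(2 * u x * deriv u x * (Real.cos x / Real.sin x)
        + u x ^ 2 * ((-Real.sin x * Real.sin x - Real.cos x * Real.cos x) / Real.sin x ^ 2)) := by
      simp only [hf1, hg]
      have hs2 : Real.sin x ^ 2 ≠ 0 := pow_ne_zero _ hs
      have hs2 : Real.sin x ^ 2 ≠ 0 := pow_ne_zero _ hs
      linear_combination (-(u x ^ 2) / Real.sin x ^ 2) * hpyth
    rw [hval]
    exact h3
  have hIBP : (∫ θ in a'..b', f1 θ - g θ) = 0 := by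
    rw [intervalIntegral.integral_eq_sub_of_hasDerivAt hFderiv (hif1.sub hig)]
    have e1 : u a' = 0 := (hout a' (Or.inl le_rfl)).1
    have e2 : u b' = 0 := (hout b' (Or.inr le_rfl)).1
    simp [hF, e1, e2]
  have hIeqG : (∫ θ in a'..b', f1 θ) = ∫ θ in a'..b', g θ := by
    have := intervalIntegral.integral_sub hif1 hig
    rw [hIBP] at this
    linarith [this]
  -- pointwise inequality g ≤ 2 f2 + (1/2) f1 on [a', b']
  have hpt : ∀ x ∈ Set.Icc a' b', g x ≤ 2 * f2 x + (1/2) * f1 x := by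
    intro x hx
    have hs : 0 < Real.sin x := hsin x hx
    have hs2 : 0 < Real.sin x ^ 2 := by positivity
    have hpyth := Real.sin_sq_add_cos_sq x
    simp only [hg, hf1, hf2]
    have key : 2 * u x * deriv u x * (Real.cos x / Real.sin x)
        = (2 * u x * deriv u x * Real.cos x * Real.sin x) / Real.sin x ^ 2 := by
      field_simp
    rw [key, div_le_iff₀ hs2]
    have expand : (2 * (deriv u x) ^ 2 + 1 / 2 * (u x ^ 2 / Real.sin x ^ 2)) * Real.sin x ^ 2
        = 2 * (deriv u x) ^ 2 * Real.sin x ^ 2 + u x ^ 2 / 2 := by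
      field_simp
    rw [expand]
    nlinarith [sq_nonneg (2 * deriv u x * Real.sin x - u x * Real.cos x), hpyth,
      sq_nonneg (u x * Real.sin x)]
  -- integral monotonicity
  have hmono : (∫ θ in a'..b', g θ) ≤ ∫ θ in a'..b', (2 * f2 θ + (1/2) * f1 θ) := by
    apply intervalIntegral.integral_mono_on ha'b' hig
    · exact ((hif2.const_mul 2).add (hif1.const_mul (1/2)))
    · exact hpt
  have hlin : (∫ θ in a'..b', (2 * f2 θ + (1/2) * f1 θ))
      = 2 * (∫ θ in a'..b', f2 θ) + (1/2) * (∫ θ in a'..b', f1 θ) := by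
    rw [intervalIntegral.integral_add (hif2.const_mul 2) (hif1.const_mul (1/2)),
      intervalIntegral.integral_const_mul, intervalIntegral.integral_const_mul]
  rw [hred1, hred2]
  rw [hlin] at hmono
  rw [hIeqG]
  linarith [hmono]
end

section
/- Let u : ℝ → ℝ be continuous on [0,π] with u(0) = u(π) = 0, continuously differentiable on (0,π), with ∫_0^π u'(θ)² dθ < ∞, and not identically zero on (0,π). Then ∫_0^π u'(θ)² dθ > (1/4) ∫_0^π u(θ)²/sin²θ dθ; in particular the infimum 1/4 of the quotient (∫_0^π u'(θ)² dθ)/(∫_0^π u(θ)²/sin²θ dθ) is not attained. -/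
open MeasureTheory Real intervalIntegral Set Filter Topology

/-!
With `w = cot θ / 2` one has `w' + w² = -1 / (4 sin² θ) - 1 / 4`, so on `[a, b] ⊂ (0, π)` the
ground-state identity `u'² = (u' - w u)² + (u² w)' + u² / (4 sin² θ) + u² / 4` gives
`∫ u'² ≥ ¼ ∫ u² / sin² + ¼ ∫ u² + [u² cot / 2]ₐᵇ`. Near the endpoints Cauchy–Schwarz gives
`u(a)² ≤ a ∫₀ᵃ u'²`, and `a cot a ≤ 1`, so for `b = π - a` the boundary terms are controlled by the
integrals of `u'²` over `[0, a]` and `[π - a, π]`. Letting `a → 0` yields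
`∫₀^π u'² ≥ ¼ ∫₀^π u² / sin² + ¼ ∫₀^π u²`, and the last term is positive.
-/

theorem IntervalIntegrable.of_sq {μ : Measure ℝ} [IsLocallyFiniteMeasure μ] {f : ℝ → ℝ}
    {a b : ℝ} (hf : AEStronglyMeasurable f μ)
    (h : IntervalIntegrable (fun x => f x ^ 2) μ a b) :
    IntervalIntegrable f μ a b := by
  rw [intervalIntegrable_iff] at h ⊢
  have : IsFiniteMeasure (μ.restrict (uIoc a b)) :=
    isFiniteMeasure_restrict.2 measure_Ioc_lt_top.ne
  exact ((memLp_two_iff_integrable_sq hf.restrict).2 h).integrable one_le_two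

theorem sq_sub_le_mul_integral_deriv_sq {f : ℝ → ℝ} {s t : ℝ} (hst : s ≤ t)
    (hf : ContinuousOn f (Icc s t)) (hd : ∀ x ∈ Ioo s t, DifferentiableAt ℝ f x)
    (hint : IntervalIntegrable (fun x => deriv f x ^ 2) volume s t) :
    (f t - f s) ^ 2 ≤ (t - s) * ∫ x in s..t, deriv f x ^ 2 := by
  rcases hst.eq_or_lt with rfl | hst
  · simp
  have hint' : IntervalIntegrable (deriv f) volume s t :=
    hint.of_sq (measurable_deriv f).aestronglyMeasurable
  have hFTC : ∫ x in s..t, deriv f x = f t - f s :=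
    integral_eq_sub_of_hasDeriv_right_of_le hst.le hf
      (fun x hx => (hd x hx).hasDerivAt.hasDerivWithinAt) hint'
  -- Cauchy–Schwarz in the form: the variance of `f'` about its mean `m` is nonnegative
  set m := (f t - f s) / (t - s)
  have hvar : ∫ x in s..t, (deriv f x - m) ^ 2
      = (∫ x in s..t, deriv f x ^ 2) - 2 * m * (f t - f s) + m ^ 2 * (t - s) := by
    have h1 : IntervalIntegrable (fun x => deriv f x ^ 2 - 2 * m * deriv f x) volume s t :=
      hint.sub (hint'.const_mul _)
    rw [show (fun x => (deriv f x - m) ^ 2) = fun x => deriv f x ^ 2 - 2 * m * deriv f x + m ^ 2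
      from funext fun x => by ring]
    rw [integral_add h1 intervalIntegrable_const, integral_sub hint (hint'.const_mul _),
      intervalIntegral.integral_const_mul, hFTC, intervalIntegral.integral_const, smul_eq_mul]
    ring
  have hnonneg : 0 ≤ ∫ x in s..t, (deriv f x - m) ^ 2 :=
    integral_nonneg hst.le fun _ _ => sq_nonneg _
  have hL : 0 < t - s := sub_pos.2 hst
  rw [hvar] at hnonneg
  have hm : m * (t - s) = f t - f s := div_mul_cancel₀ _ hL.ne'
  nlinarith [mul_nonneg hL.le hnonneg]

theorem sq_mul_sub_sq_mul_le_integral {u u' w w' : ℝ → ℝ} {a b : ℝ} (hab : a ≤ b)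
    (hu : ∀ x ∈ Icc a b, HasDerivAt u (u' x) x) (hw : ∀ x ∈ Icc a b, HasDerivAt w (w' x) x)
    (hu' : ContinuousOn u' (Icc a b)) (hw' : ContinuousOn w' (Icc a b)) :
    u b ^ 2 * w b - u a ^ 2 * w a ≤ ∫ x in a..b, (u' x ^ 2 + u x ^ 2 * (w' x + w x ^ 2)) := by
  have hu_cont : ContinuousOn u (Icc a b) := fun x hx => (hu x hx).continuousAt.continuousWithinAt
  have hw_cont : ContinuousOn w (Icc a b) := fun x hx => (hw x hx).continuousAt.continuousWithinAt
  have hF : ∀ x ∈ uIcc a b, HasDerivAt (fun x => u x ^ 2 * w x)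
      (2 * u x * u' x * w x + u x ^ 2 * w' x) x := by
    intro x hx
    rw [uIcc_of_le hab] at hx
    exact (((hu x hx).fun_pow 2).fun_mul (hw x hx)).congr_deriv (by norm_num)
  rw [← integral_eq_sub_of_hasDerivAt hF
    ((by fun_prop : ContinuousOn _ _).intervalIntegrable_of_Icc hab)]
  refine integral_mono_on hab ((by fun_prop : ContinuousOn _ _).intervalIntegrable_of_Icc hab)
    ((by fun_prop : ContinuousOn _ _).intervalIntegrable_of_Icc hab) fun x _ => ?_
  -- the integrand exceeds `(u² w)'` by `(u' - w u)²`
  nlinarith [sq_nonneg (u' x - w x * u x)]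

theorem tendsto_integral_add_sub {g : ℝ → ℝ} {s t : ℝ} (hst : s < t)
    (hg : IntervalIntegrable g volume s t) :
    Tendsto (fun a => ∫ x in s + a..t - a, g x) (𝓝[>] 0) (𝓝 (∫ x in s..t, g x)) := by
  set F := fun x => ∫ y in s..x, g y
  have hF : ContinuousOn F (Icc s t) := by
    simpa only [uIcc_of_le hst.le] using continuousOn_primitive_interval' hg left_mem_uIcc
  have hsmall : ∀ᶠ a in 𝓝[>] (0 : ℝ), a ∈ Ioo 0 (t - s) := Ioo_mem_nhdsGT (sub_pos.2 hst)
  have hmem : ∀ {p : ℝ → ℝ}, Continuous p → (∀ a ∈ Ioo 0 (t - s), p a ∈ Icc s t) →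
      p 0 ∈ Icc s t → Tendsto (fun a => F (p a)) (𝓝[>] 0) (𝓝 (F (p 0))) :=
    fun hp hpI hp0 => (hF _ hp0).tendsto.comp (tendsto_nhdsWithin_iff.2
      ⟨(hp.tendsto 0).mono_left nhdsWithin_le_nhds, hsmall.mono hpI⟩)
  have hright := hmem (p := fun a => t - a) (by fun_prop)
    (fun a ha => ⟨by linarith [ha.2], by linarith [ha.1]⟩) ⟨by simp [hst.le], by simp⟩
  have hleft := hmem (p := fun a => s + a) (by fun_prop)
    (fun a ha => ⟨by linarith [ha.1], by linarith [ha.2]⟩) ⟨by simp, by simp [hst.le]⟩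
  simp only [sub_zero, add_zero] at hright hleft
  have hlim := hright.sub hleft
  rw [show F s = 0 from integral_same, sub_zero] at hlim
  refine hlim.congr' (hsmall.mono fun a ha => ?_)
  have hsub : ∀ {c}, c ∈ Icc s t → IntervalIntegrable g volume s c := fun hc =>
    hg.mono_set (uIcc_subset_uIcc left_mem_uIcc (uIcc_of_le hst.le ▸ hc))
  exact integral_interval_sub_left (hsub ⟨by linarith [ha.2], by linarith [ha.1]⟩)
    (hsub ⟨by linarith [ha.1], by linarith [ha.2]⟩)

theorem integral_le_of_eventually_integral_add_sub_le {g c : ℝ → ℝ} {s t C : ℝ}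
    (hst : s < t) (hg : ∀ x ∈ Ioo s t, 0 ≤ g x) (hc : Tendsto c (𝓝[>] 0) (𝓝 C))
    (h : ∀ᶠ a in 𝓝[>] 0, ∫ x in s + a..t - a, g x ≤ c a) : ∫ x in s..t, g x ≤ C := by
  by_cases hgi : IntervalIntegrable g volume s t
  · exact le_of_tendsto_of_tendsto (tendsto_integral_add_sub hst hgi) hc h
  -- otherwise the integral is the junk value `0`
  rw [integral_undef hgi]
  have hsmall : ∀ᶠ a in 𝓝[>] (0 : ℝ), a ∈ Ioo 0 ((t - s) / 2) :=
    Ioo_mem_nhdsGT (by linarith)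
  refine ge_of_tendsto hc ((h.and hsmall).mono fun a ⟨hle, ha⟩ => le_trans ?_ hle)
  exact integral_nonneg (by linarith [ha.2]) fun x hx =>
    hg x ⟨by linarith [hx.1, ha.1], by linarith [hx.2, ha.1]⟩

theorem Real.hasDerivAt_cot {x : ℝ} (hx : sin x ≠ 0) : HasDerivAt cot (-1 / sin x ^ 2) x := by
  have h := (hasDerivAt_cos x).div (hasDerivAt_sin x) hx
  rw [show cot = fun x => cos x / sin x from funext cot_eq_cos_div_sin]
  refine h.congr_deriv ?_
  field_simp
  linear_combination (-1) * sin_sq_add_cos_sq x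

theorem Real.cot_pi_sub (x : ℝ) : cot (π - x) = -cot x := by
  simp only [cot_eq_cos_div_sin, sin_pi_sub, cos_pi_sub, neg_div]

theorem Real.mul_cot_le_one {a : ℝ} (ha : 0 ≤ a) (ha' : a < π / 2) : a * cot a ≤ 1 := by
  rcases ha.eq_or_lt with rfl | ha
  · simp
  rw [← inv_inv (cot a), cot_inv_eq_tan, ← div_eq_mul_inv,
    div_le_one (tan_pos_of_pos_of_lt_pi_div_two ha ha')]
  exact le_tan ha.le ha'

theorem sq_mul_cot_le {y a D : ℝ} (ha : 0 < a) (ha' : a < π / 2) (hy : y ^ 2 ≤ a * D) :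
    y ^ 2 * cot a ≤ D := by
  have hcos : 0 < cos a := cos_pos_of_mem_Ioo ⟨by linarith, ha'⟩
  have hcot : 0 ≤ cot a := by
    rw [cot_eq_cos_div_sin]
    exact div_nonneg hcos.le (sin_nonneg_of_nonneg_of_le_pi ha.le (by linarith))
  have hD : 0 ≤ D := nonneg_of_mul_nonneg_right ((sq_nonneg y).trans hy) ha
  calc y ^ 2 * cot a ≤ a * D * cot a := mul_le_mul_of_nonneg_right hy hcot
    _ = D * (a * cot a) := by ring
    _ ≤ D := mul_le_of_le_one_right hD (mul_cot_le_one ha.le ha')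

theorem integral_sq_div_sin_sq_add_cot_le_integral_deriv_sq {u : ℝ → ℝ}
    (hu : ContDiffOn ℝ 1 u (Ioo 0 π)) {a b : ℝ} (ha : 0 < a) (hab : a ≤ b) (hb : b < π) :
    (∫ x in a..b, u x ^ 2 / sin x ^ 2) / 4 + (∫ x in a..b, u x ^ 2) / 4
      + (u b ^ 2 * cot b - u a ^ 2 * cot a) / 2 ≤ ∫ x in a..b, deriv u x ^ 2 := by
  have hsub : Icc a b ⊆ Ioo 0 π := Icc_subset_Ioo ha hb
  have hsin : ∀ x ∈ Icc a b, sin x ≠ 0 := fun x hx =>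
    (sin_pos_of_pos_of_lt_pi (hsub hx).1 (hsub hx).2).ne'
  have hd : ∀ x ∈ Icc a b, HasDerivAt u (deriv u x) x := fun x hx =>
    ((hu.differentiableOn one_ne_zero).differentiableAt
      (isOpen_Ioo.mem_nhds (hsub hx))).hasDerivAt
  have hd' : ContinuousOn (deriv u) (Icc a b) :=
    (hu.continuousOn_deriv_of_isOpen isOpen_Ioo le_rfl).mono hsub
  have hu_cont : ContinuousOn u (Icc a b) := fun x hx => (hd x hx).continuousAt.continuousWithinAt
  have hw : ∀ x ∈ Icc a b, HasDerivAt (fun x => cot x / 2) (-1 / sin x ^ 2 / 2) x :=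
    fun x hx => (hasDerivAt_cot (hsin x hx)).div_const 2
  have hw' : ContinuousOn (fun x => -1 / sin x ^ 2 / 2) (Icc a b) :=
    (continuousOn_const.div (by fun_prop) fun x hx => pow_ne_zero 2 (hsin x hx)).div_const 2
  have key := sq_mul_sub_sq_mul_le_integral hab hd hw hd' hw'
  have hI : IntervalIntegrable (fun x => u x ^ 2 / sin x ^ 2) volume a b :=
    ((hu_cont.pow 2).div (by fun_prop) fun x hx =>
      pow_ne_zero 2 (hsin x hx)).intervalIntegrable_of_Icc hab
  have hJ : IntervalIntegrable (fun x => u x ^ 2) volume a b :=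
    (hu_cont.pow 2).intervalIntegrable_of_Icc hab
  have hK : IntervalIntegrable (fun x => deriv u x ^ 2) volume a b :=
    (hd'.pow 2).intervalIntegrable_of_Icc hab
  have hriccati : ∫ x in a..b, (deriv u x ^ 2 + u x ^ 2 * (-1 / sin x ^ 2 / 2 + (cot x / 2) ^ 2))
      = ∫ x in a..b, (deriv u x ^ 2 - (u x ^ 2 / sin x ^ 2) / 4 - u x ^ 2 / 4) := by
    refine integral_congr fun x hx => ?_
    rw [uIcc_of_le hab] at hx
    have := hsin x hx
    simp only [cot_eq_cos_div_sin]
    field_simp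
    linear_combination 4 * u x ^ 2 * sin_sq_add_cos_sq x
  rw [hriccati, integral_sub (hK.sub (hI.div_const 4)) (hJ.div_const 4),
    integral_sub hK (hI.div_const 4), intervalIntegral.integral_div,
    intervalIntegral.integral_div] at key
  linarith

theorem integral_sq_div_sin_sq_add_integral_sq_le {u : ℝ → ℝ}
    (hu_cont : ContinuousOn u (Icc 0 π)) (hu0 : u 0 = 0) (huπ : u π = 0)
    (hu_diff : ContDiffOn ℝ 1 u (Ioo 0 π))
    (hu_int : IntervalIntegrable (fun x => deriv u x ^ 2) volume 0 π) {a : ℝ} (ha : 0 < a)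
    (ha' : a < π / 2) :
    ∫ x in a..π - a, u x ^ 2 / sin x ^ 2 ≤
      4 * (∫ x in 0..π, deriv u x ^ 2) - ∫ x in a..π - a, u x ^ 2 := by
  have hloc := integral_sq_div_sin_sq_add_cot_le_integral_deriv_sq (b := π - a) hu_diff ha
    (by linarith) (by linarith)
  rw [cot_pi_sub] at hloc
  have hsub : ∀ {c d}, 0 ≤ c → c ≤ d → d ≤ π →
      IntervalIntegrable (fun x => deriv u x ^ 2) volume c d := fun hc hcd hd =>
    hu_int.mono_set (by
      rw [uIcc_of_le hcd, uIcc_of_le pi_pos.le]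
      exact Icc_subset_Icc hc hd)
  have hdiff : ∀ x ∈ Ioo 0 π, DifferentiableAt ℝ u x := fun x hx =>
    (hu_diff.differentiableOn one_ne_zero).differentiableAt (isOpen_Ioo.mem_nhds hx)
  have hsplit : (∫ x in 0..a, deriv u x ^ 2)
      + ((∫ x in a..π - a, deriv u x ^ 2) + ∫ x in π - a..π, deriv u x ^ 2)
      = ∫ x in 0..π, deriv u x ^ 2 := by
    rw [integral_add_adjacent_intervals (hsub ha.le (by linarith) (by linarith))
        (hsub (by linarith) (by linarith) le_rfl),
      integral_add_adjacent_intervals (hsub le_rfl ha.le (by linarith))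
        (hsub ha.le (by linarith) le_rfl)]
  have hleft : u a ^ 2 * cot a ≤ ∫ x in 0..a, deriv u x ^ 2 := by
    refine sq_mul_cot_le ha ha' ?_
    simpa [hu0] using sq_sub_le_mul_integral_deriv_sq ha.le
      (hu_cont.mono (Icc_subset_Icc le_rfl (by linarith)))
      (fun x hx => hdiff x ⟨hx.1, by linarith [hx.2]⟩) (hsub le_rfl ha.le (by linarith))
  have hright : u (π - a) ^ 2 * cot a ≤ ∫ x in π - a..π, deriv u x ^ 2 := by
    refine sq_mul_cot_le ha ha' ?_
    simpa [huπ] using sq_sub_le_mul_integral_deriv_sq (s := π - a) (by linarith)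
      (hu_cont.mono (Icc_subset_Icc (by linarith) le_rfl))
      (fun x hx => hdiff x ⟨by linarith [hx.1], hx.2⟩) (hsub (by linarith) (by linarith) le_rfl)
  have hD : 0 ≤ ∫ x in 0..a, deriv u x ^ 2 := integral_nonneg ha.le fun _ _ => sq_nonneg _
  have hE : 0 ≤ ∫ x in π - a..π, deriv u x ^ 2 :=
    integral_nonneg (by linarith) fun _ _ => sq_nonneg _
  linarith

/-- If `u` is continuous on `[0,π]` with `u(0) = u(π) = 0`,
continuously differentiable on `(0,π)`, with `∫₀^π u'² < ∞`, and not
identically zero, then `∫₀^π u'² > (1/4) ∫₀^π u²/sin²θ`; in particular the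
infimum `1/4` is not attained. -/
theorem one_dim_hardy_sin_strict (u : ℝ → ℝ)
    (hu_cont : ContinuousOn u (Set.Icc 0 Real.pi))
    (hu0 : u 0 = 0) (huπ : u Real.pi = 0)
    (hu_diff : ContDiffOn ℝ 1 u (Set.Ioo 0 Real.pi))
    (hu_int : IntervalIntegrable (fun θ => (deriv u θ) ^ 2) volume 0 Real.pi)
    (hu_ne : ∃ θ ∈ Set.Ioo 0 Real.pi, u θ ≠ 0) :
    (∫ θ in (0:ℝ)..Real.pi, (deriv u θ) ^ 2) >
      (1 / 4 : ℝ) * ∫ θ in (0:ℝ)..Real.pi, u θ ^ 2 / Real.sin θ ^ 2 := by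
  have hu2 : ContinuousOn (fun x => u x ^ 2) (Icc 0 π) := hu_cont.pow 2
  have hbound : ∫ x in 0..π, u x ^ 2 / sin x ^ 2 ≤
      4 * (∫ x in 0..π, deriv u x ^ 2) - ∫ x in 0..π, u x ^ 2 := by
    refine integral_le_of_eventually_integral_add_sub_le pi_pos (fun x _ => by positivity)
      (tendsto_const_nhds.sub (tendsto_integral_add_sub pi_pos
        (hu2.intervalIntegrable_of_Icc pi_pos.le))) ?_
    filter_upwards [Ioo_mem_nhdsGT (half_pos pi_pos)] with a ha
    simpa only [zero_add] using
      integral_sq_div_sin_sq_add_integral_sq_le hu_cont hu0 huπ hu_diff hu_int ha.1 ha.2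
  obtain ⟨θ, hθ, huθ⟩ := hu_ne
  have hpos : 0 < ∫ x in 0..π, u x ^ 2 :=
    integral_pos pi_pos hu2 (fun x _ => sq_nonneg _)
      ⟨θ, Ioo_subset_Icc_self hθ, by positivity⟩
  linarith
end

section
/- For every u ∈ C_c^∞((0,π)), setting v(θ) = u(θ)/(sin θ)^{1/2} for θ ∈ (0,π), the identity ∫_0^π [u'(θ)² − u(θ)²/(4 sin²θ)] dθ = (1/4) ∫_0^π u(θ)² dθ + ∫_0^π v'(θ)² sin θ dθ holds. -/
open MeasureTheory Real intervalIntegral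

/-- For `u ∈ C_c^∞((0,π))` and `v(θ) = u(θ)/√(sin θ)`,
`∫₀^π [u'² − u²/(4 sin²θ)] dθ = (1/4) ∫₀^π u² dθ + ∫₀^π v'(θ)² sin θ dθ`. -/
theorem one_dim_hardy_sin_identity (u : ℝ → ℝ)
    (hu_smooth : ContDiff ℝ (⊤ : ℕ∞) u) (hu_cpt : HasCompactSupport u)
    (hu_supp : tsupport u ⊆ Set.Ioo 0 Real.pi) :
    ∫ θ in (0:ℝ)..Real.pi,
        ((deriv u θ) ^ 2 - u θ ^ 2 / (4 * Real.sin θ ^ 2)) =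
      (1 / 4 : ℝ) * (∫ θ in (0:ℝ)..Real.pi, u θ ^ 2) +
        ∫ θ in (0:ℝ)..Real.pi,
          (deriv (fun t => u t / Real.sqrt (Real.sin t)) θ) ^ 2 * Real.sin θ := by
  by_cases hKe : tsupport u = ∅
  · have hu0 : u = fun _ => (0:ℝ) := by
      funext x
      exact image_eq_zero_of_notMem_tsupport (by simp [hKe])
    rw [hu0]
    simp
  -- notation
  set v : ℝ → ℝ := fun t => u t / Real.sqrt (Real.sin t) with hv_def
  have hne : (tsupport u).Nonempty := Set.nonempty_iff_ne_empty.2 hKe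
  have hKc : IsCompact (tsupport u) := hu_cpt
  set a := sInf (tsupport u) with ha_def
  set b := sSup (tsupport u) with hb_def
  have haK : a ∈ tsupport u := hKc.sInf_mem hne
  have hbK : b ∈ tsupport u := hKc.sSup_mem hne
  have ha : a ∈ Set.Ioo 0 Real.pi := hu_supp haK
  have hb : b ∈ Set.Ioo 0 Real.pi := hu_supp hbK
  set c := a / 2 with hc_def
  set d := (b + Real.pi) / 2 with hd_def
  have hc0 : 0 < c := by simp [hc_def]; linarith [ha.1]
  have hdπ : d < Real.pi := by simp [hd_def]; linarith [hb.2]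
  have hca : c < a := by simp [hc_def]; linarith [ha.1]
  have hbd : b < d := by simp [hd_def]; linarith [hb.2]
  have hab : a ≤ b := le_csSup hKc.bddAbove haK
  have hcd : c ≤ d := by linarith
  have hsupp_cd : tsupport u ⊆ Set.Ioo c d := by
    intro x hx
    exact ⟨lt_of_lt_of_le hca (csInf_le hKc.bddBelow hx),
      lt_of_le_of_lt (le_csSup hKc.bddAbove hx) hbd⟩
  -- vanishing outside (c,d)
  have hzero : ∀ x, x ∉ Set.Ioo c d → u x = 0 ∧ deriv u x = 0 ∧ deriv v x = 0 := by
    intro x hx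
    have hxK : x ∉ tsupport u := fun h => hx (hsupp_cd h)
    have hmem : (tsupport u)ᶜ ∈ nhds x :=
      (isClosed_tsupport u).isOpen_compl.mem_nhds hxK
    have hueq : u =ᶠ[nhds x] (fun _ => (0:ℝ)) :=
      Filter.eventually_of_mem hmem fun y hy => image_eq_zero_of_notMem_tsupport hy
    have hveq : v =ᶠ[nhds x] (fun _ => (0:ℝ)) :=
      Filter.eventually_of_mem hmem fun y hy => by
        simp [hv_def, image_eq_zero_of_notMem_tsupport hy]
    refine ⟨image_eq_zero_of_notMem_tsupport hxK, ?_, ?_⟩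
    · rw [hueq.deriv_eq]; simp
    · rw [hveq.deriv_eq]; simp
  -- reduce integrals over (0,π) to integrals over (c,d)
  have hIoc1 : Set.Ioo c d ⊆ Set.Ioc c d := Set.Ioo_subset_Ioc_self
  have hIoc2 : Set.Ioo c d ⊆ Set.Ioc 0 Real.pi := fun x hx =>
    ⟨lt_trans hc0 hx.1, le_of_lt (lt_trans hx.2 hdπ)⟩
  have hshrink : ∀ f : ℝ → ℝ, (∀ x, x ∉ Set.Ioo c d → f x = 0) →
      (∫ θ in (0:ℝ)..Real.pi, f θ) = ∫ θ in c..d, f θ := by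
    intro f hf
    have hsupp : Function.support f ⊆ Set.Ioo c d := by
      intro x hx
      by_contra h
      exact hx (hf x h)
    rw [intervalIntegral.integral_eq_integral_of_support_subset
      (hsupp.trans hIoc2),
      ← intervalIntegral.integral_eq_integral_of_support_subset
      (hsupp.trans hIoc1)]
  have e1 : (∫ θ in (0:ℝ)..Real.pi,
        ((deriv u θ) ^ 2 - u θ ^ 2 / (4 * Real.sin θ ^ 2))) =
      ∫ θ in c..d, ((deriv u θ) ^ 2 - u θ ^ 2 / (4 * Real.sin θ ^ 2)) := by
    refine hshrink _ fun x hx => ?_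
    obtain ⟨h1, h2, _⟩ := hzero x hx
    simp [h1, h2]
  have e2 : (∫ θ in (0:ℝ)..Real.pi, u θ ^ 2) = ∫ θ in c..d, u θ ^ 2 := by
    refine hshrink _ fun x hx => ?_
    obtain ⟨h1, _, _⟩ := hzero x hx
    simp [h1]
  have e3 : (∫ θ in (0:ℝ)..Real.pi, (deriv v θ) ^ 2 * Real.sin θ) =
      ∫ θ in c..d, (deriv v θ) ^ 2 * Real.sin θ := by
    refine hshrink _ fun x hx => ?_
    obtain ⟨_, _, h3⟩ := hzero x hx
    simp [h3]
  rw [e1, e2, e3]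
  -- positivity of sin on [c,d]
  have hsin : ∀ θ ∈ Set.Icc c d, 0 < Real.sin θ := fun θ hθ =>
    Real.sin_pos_of_pos_of_lt_pi (lt_of_lt_of_le hc0 hθ.1) (lt_of_le_of_lt hθ.2 hdπ)
  -- derivative of u
  have hu' : ∀ θ : ℝ, HasDerivAt u (deriv u θ) θ := fun θ =>
    (hu_smooth.differentiable (by simp) θ).hasDerivAt
  -- derivative of v
  set F : ℝ → ℝ := fun θ =>
    (deriv u θ * Real.sqrt (Real.sin θ) -
      u θ * (Real.cos θ / (2 * Real.sqrt (Real.sin θ)))) / Real.sin θ with hF_def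
  have hvF : ∀ θ ∈ Set.Icc c d, HasDerivAt v (F θ) θ := by
    intro θ hθ
    have hs := hsin θ hθ
    have hr : 0 < Real.sqrt (Real.sin θ) := Real.sqrt_pos.mpr hs
    have hsq := (Real.hasDerivAt_sin θ).sqrt hs.ne'
    have := (hu' θ).div hsq hr.ne'
    rwa [Real.sq_sqrt hs.le] at this
  have hderiv_v : ∀ θ ∈ Set.Icc c d, deriv v θ = F θ := fun θ hθ =>
    (hvF θ hθ).deriv
  -- continuity facts
  have contU : Continuous u := hu_smooth.continuous
  have contU' : Continuous (deriv u) := hu_smooth.continuous_deriv (by simp)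
  have contF : ContinuousOn F (Set.Icc c d) := by
    apply ContinuousOn.div
    · apply ContinuousOn.sub
      · exact (contU'.continuousOn.mul
          (Real.continuous_sin.sqrt.continuousOn))
      · refine contU.continuousOn.mul (ContinuousOn.div
          Real.continuous_cos.continuousOn
          (continuousOn_const.mul Real.continuous_sin.sqrt.continuousOn)
          fun θ hθ => ?_)
        have := Real.sqrt_pos.mpr (hsin θ hθ)
        positivity
    · exact Real.continuous_sin.continuousOn
    · exact fun θ hθ => (hsin θ hθ).ne'
  -- interval integrability
  have I1 : IntervalIntegrable
      (fun θ => (deriv u θ) ^ 2 - u θ ^ 2 / (4 * Real.sin θ ^ 2)) volume c d := by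
    apply ContinuousOn.intervalIntegrable
    rw [Set.uIcc_of_le hcd]
    apply ContinuousOn.sub
    · exact (contU'.pow 2).continuousOn
    · refine ContinuousOn.div (contU.pow 2).continuousOn
        (continuousOn_const.mul ((Real.continuous_sin.pow 2).continuousOn))
        fun θ hθ => ?_
      have := hsin θ hθ
      positivity
  have I2 : IntervalIntegrable (fun θ => u θ ^ 2) volume c d :=
    (contU.pow 2).intervalIntegrable c d
  have I3 : IntervalIntegrable (fun θ => (deriv v θ) ^ 2 * Real.sin θ) volume c d := by
    apply ContinuousOn.intervalIntegrable
    rw [Set.uIcc_of_le hcd]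
    refine ContinuousOn.mul (ContinuousOn.pow ?_ 2) Real.continuous_sin.continuousOn
    exact ContinuousOn.congr contF hderiv_v
  -- the antiderivative W for the difference
  set W : ℝ → ℝ := fun t => u t ^ 2 * Real.cos t / (2 * Real.sin t) with hW_def
  set g : ℝ → ℝ := fun θ =>
    ((deriv u θ) ^ 2 - u θ ^ 2 / (4 * Real.sin θ ^ 2)) -
      ((1 / 4 : ℝ) * u θ ^ 2 + (deriv v θ) ^ 2 * Real.sin θ) with hg_def
  have hWderiv : ∀ θ ∈ Set.uIcc c d, HasDerivAt W (g θ) θ := by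
    intro θ hθ
    rw [Set.uIcc_of_le hcd] at hθ
    have hs := hsin θ hθ
    have hs0 : Real.sin θ ≠ 0 := hs.ne'
    have hr : 0 < Real.sqrt (Real.sin θ) := Real.sqrt_pos.mpr hs
    have hr2 : Real.sqrt (Real.sin θ) ^ 2 = Real.sin θ := Real.sq_sqrt hs.le
    have hpy : Real.sin θ ^ 2 + Real.cos θ ^ 2 = 1 := Real.sin_sq_add_cos_sq θ
    have hW0 := (((hu' θ).pow 2).mul (Real.hasDerivAt_cos θ)).div
      ((Real.hasDerivAt_sin θ).const_mul 2) (by positivity)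
    convert hW0 using 1
    · rfl
    · rfl
    · rfl
    rw [hg_def]
    simp only
    rw [hderiv_v θ hθ, hF_def]
    simp only
    have hnum : deriv u θ * Real.sqrt (Real.sin θ) -
        u θ * (Real.cos θ / (2 * Real.sqrt (Real.sin θ))) =
        (2 * deriv u θ * Real.sin θ - u θ * Real.cos θ) /
          (2 * Real.sqrt (Real.sin θ)) := by
      field_simp
      linear_combination (2 * deriv u θ) * hr2
    rw [hnum]
    rw [div_div]
    rw [div_pow]
    rw [mul_pow, mul_pow, hr2]
    field_simp
    ring_nf
    simp only [Pi.pow_apply, Pi.mul_apply]; linear_combination (u θ ^ 2 * 4) * hpy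
  have hFTC := intervalIntegral.integral_eq_sub_of_hasDerivAt hWderiv
    ((I1.sub ((I2.const_mul (1/4)).add I3)))
  have hWc : W c = 0 := by
    have : u c = 0 := (hzero c (by simp [lt_irrefl])).1
    simp [hW_def, this]
  have hWd : W d = 0 := by
    have : u d = 0 := (hzero d (by simp [lt_irrefl])).1
    simp [hW_def, this]
  rw [hWc, hWd, sub_zero] at hFTC
  have hsplit : (∫ θ in c..d, g θ) =
      (∫ θ in c..d, ((deriv u θ) ^ 2 - u θ ^ 2 / (4 * Real.sin θ ^ 2))) -
        ((1 / 4 : ℝ) * (∫ θ in c..d, u θ ^ 2) +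
          ∫ θ in c..d, (deriv v θ) ^ 2 * Real.sin θ) := by
    rw [hg_def]
    rw [intervalIntegral.integral_sub I1 ((I2.const_mul (1/4)).add I3),
      intervalIntegral.integral_add (I2.const_mul (1/4)) I3,
      intervalIntegral.integral_const_mul]
  rw [hFTC] at hsplit
  linarith [hsplit]
end
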